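/- Let κ ∈ ℂ, κ ≠ 0. The map S₁ : (ℂ²)⁴ → (ℂ²)⁴ given by S₁(x₁,x₂,y₁,y₂,z₁,z₂,t₁,t₂) = (x₁y₁/(y₁ + x₁z₁), x₂, x₁z₁/κ, y₂, (y₁ + x₁z₁)/x₁, t₂, t₁y₂/x₂, z₂) is a 4-simplex map (the 4-simplex identity holding at every point of (ℂ²)^{10} at which all denominators occurring in both composed sides are nonzero); it is noninvolutive (the first component of S₁∘S₁ equals x₁²y₁z₁/((y₁ + x₁z₁)(κy₁ + x₁z₁)), so there is a point where S₁(S₁(p)) ≠ p); and I₁ = x₂, I₂ = y₂, I₃ = t₂z₂ and I₄ = t₂ + z₂ are invariants of S₁, i.e. writing S₁(x₁,x₂,y₁,y₂,z₁,z₂,t₁,t₂) = (u₁,u₂,v₁,v₂,w₁,w₂,r₁,r₂) one has u₂ = x₂, v₂ = y₂, w₂r₂ = t₂z₂ and w₂ + r₂ = t₂ + z₂ wherever defined. -/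

import Mathlib

noncomputable section

namespace Paper4Simplex

variable {X : Type*}

/-- Quadruples over `X`. -/
abbrev Q (X : Type*) : Type _ := X × X × X × X

/-- 10-tuples over `X`. -/
abbrev P (X : Type*) : Type _ := X × X × X × X × X × X × X × X × X × X

/-- `S` acting on coordinates 1,2,3,4 of a 10-tuple. -/
def app1234 (S : Q X → Q X) : P X → P X := fun p =>
  match p with
  | (a,b,c,d,e,f,g,h,i,j) =>
    match S (a,b,c,d) with
    | (A,B,C,D) => (A,B,C,D,e,f,g,h,i,j)

/-- `S` acting on coordinates 1,5,6,7 of a 10-tuple. -/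
def app1567 (S : Q X → Q X) : P X → P X := fun p =>
  match p with
  | (a,b,c,d,e,f,g,h,i,j) =>
    match S (a,e,f,g) with
    | (A,E,F,G) => (A,b,c,d,E,F,G,h,i,j)

/-- `S` acting on coordinates 2,5,8,9 of a 10-tuple. -/
def app2589 (S : Q X → Q X) : P X → P X := fun p =>
  match p with
  | (a,b,c,d,e,f,g,h,i,j) =>
    match S (b,e,h,i) with
    | (B,E,H,I) => (a,B,c,d,E,f,g,H,I,j)

/-- `S` acting on coordinates 3,6,8,10 of a 10-tuple. -/
def app368X (S : Q X → Q X) : P X → P X := fun p =>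
  match p with
  | (a,b,c,d,e,f,g,h,i,j) =>
    match S (c,f,h,j) with
    | (C,F,H,J) => (a,b,C,d,e,F,g,H,i,J)

/-- `S` acting on coordinates 4,7,9,10 of a 10-tuple. -/
def app479X (S : Q X → Q X) : P X → P X := fun p =>
  match p with
  | (a,b,c,d,e,f,g,h,i,j) =>
    match S (d,g,i,j) with
    | (D,G,I,J) => (a,b,c,D,e,f,G,h,I,J)

def proj1234 : P X → Q X := fun p => match p with
  | (a,b,c,d,_,_,_,_,_,_) => (a,b,c,d)

def proj1567 : P X → Q X := fun p => match p with
  | (a,_,_,_,e,f,g,_,_,_) => (a,e,f,g)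

def proj2589 : P X → Q X := fun p => match p with
  | (_,b,_,_,e,_,_,h,i,_) => (b,e,h,i)

def proj368X : P X → Q X := fun p => match p with
  | (_,_,c,_,_,f,_,h,_,j) => (c,f,h,j)

def proj479X : P X → Q X := fun p => match p with
  | (_,_,_,d,_,_,g,_,i,j) => (d,g,i,j)

/-- Left-hand side of the 4-simplex equation. -/
def lhs (S : Q X → Q X) : P X → P X :=
  app1234 S ∘ app1567 S ∘ app2589 S ∘ app368X S ∘ app479X S

/-- Right-hand side of the 4-simplex equation. -/
def rhs (S : Q X → Q X) : P X → P X :=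
  app479X S ∘ app368X S ∘ app2589 S ∘ app1567 S ∘ app1234 S

/-- All denominators occurring on the left-hand side composition are nonzero:
`D` holds at each quadruple to which `S` is applied. -/
def lhsDom (D : Q X → Prop) (S : Q X → Q X) (p : P X) : Prop :=
  D (proj479X p) ∧
  D (proj368X (app479X S p)) ∧
  D (proj2589 (app368X S (app479X S p))) ∧
  D (proj1567 (app2589 S (app368X S (app479X S p)))) ∧
  D (proj1234 (app1567 S (app2589 S (app368X S (app479X S p)))))

/-- All denominators occurring on the right-hand side composition are nonzero. -/
def rhsDom (D : Q X → Prop) (S : Q X → Q X) (p : P X) : Prop :=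
  D (proj1234 p) ∧
  D (proj1567 (app1234 S p)) ∧
  D (proj2589 (app1567 S (app1234 S p))) ∧
  D (proj368X (app2589 S (app1567 S (app1234 S p)))) ∧
  D (proj479X (app368X S (app2589 S (app1567 S (app1234 S p)))))


/-! Case b of the Kashaev–Korepanov–Sergeev type 4-simplex maps. -/

abbrev C2 : Type := ℂ × ℂ

/-- The map S₁ of case b. -/
def Sb1 (κ : ℂ) : Q C2 → Q C2 := fun q =>
  match q with
  | ((x1,x2),(y1,y2),(z1,z2),(t1,t2)) =>
    ((x1*y1/(y1 + x1*z1), x2), (x1*z1/κ, y2), ((y1 + x1*z1)/x1, t2), (t1*y2/x2, z2))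

/-- The map S₂ of case b. -/
def Sb2 (κ : ℂ) : Q C2 → Q C2 := fun q =>
  match q with
  | ((x1,x2),(y1,y2),(z1,z2),(t1,t2)) =>
    ((x1*y1/(y1 + x1*z1), x2), (x1*z1/κ, y2), ((y1 + x1*z1)/x1, y2), (t1*y2/x2, t2*z2/y2))

/-- Nonvanishing of the denominators of `Sb1` (besides the parameter κ). -/
def DomB1 : Q C2 → Prop := fun q =>
  match q with
  | ((x1,x2),(y1,_),(z1,_),_) => y1 + x1*z1 ≠ 0 ∧ x1 ≠ 0 ∧ x2 ≠ 0

/-- Nonvanishing of the denominators of `Sb2` (besides the parameter κ). -/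
def DomB2 : Q C2 → Prop := fun q =>
  match q with
  | ((x1,x2),(y1,y2),(z1,_),_) => y1 + x1*z1 ≠ 0 ∧ x1 ≠ 0 ∧ x2 ≠ 0 ∧ y2 ≠ 0

/-!
On first coordinates `S₁` acts on its first three entries by
`T(x, y, z) = (xy/(y + xz), xz/κ, (y + xz)/x)` and rescales the fourth by `y₂/x₂`; on second
coordinates it only swaps the last two entries. So both sides of the 4-simplex equation can be
computed in closed form: entries 1, 2, 3, 5, 6, 8 see a tetrahedron-type composite of `T`,
entries 4, 7, 9 see `T` commute with the rescalings since `T(λx, λνy, νz) = (λx', λνy', νz')`,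
and entry 10 is only rescaled. Both sides equal `sb1SimplexValue κ p`, where
`N = e(b + ac) + abf`, `E = ce + bf + bch`, `K = bf + bch + ac²h` in the first coordinates
`a, b, c, e, f, h` of entries 1, 2, 3, 5, 6, 8. The only cancellations that are not monomial are
`eK + afE = (f + ch)N` on the left and `cN + bK = (b + ac)E` on the right, and each side reaches
the common value using only the nonvanishing of its own denominators.
-/

def sb1SimplexValue (κ : ℂ) : P C2 → P C2 := fun p =>
  match p with
  | ((a1,a2),(b1,b2),(c1,c2),(d1,d2),(e1,e2),(f1,f2),(g1,g2),(h1,h2),(i1,i2),(j1,j2)) =>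
    let N := e1*(b1 + a1*c1) + a1*b1*f1
    let E := c1*e1 + b1*f1 + b1*c1*h1
    let K := b1*f1 + b1*c1*h1 + a1*c1^2*h1
    ((a1*b1*e1/N, a2), (a1*b1*c1*f1/(κ*K), b2), (c1*N/(a1*E), d2), (d1*g1/(g1 + d1*i1)*b2/a2, c2),
      (a1*c1*h1/κ^2, e2), (K/(a1*c1*κ), g2), (d1*i1/κ*e2/a2, f2), (E/(b1*c1), j2),
      ((g1 + d1*i1)/d1*e2/b2, i2), (j1*g2/d2*f2/c2, h2))

theorem lhs_Sb1_eq_sb1SimplexValue {κ : ℂ} {p : P C2} (hp : lhsDom DomB1 (Sb1 κ) p) :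
    lhs (Sb1 κ) p = sb1SimplexValue κ p := by
  obtain ⟨⟨a1,a2⟩,⟨b1,b2⟩,⟨c1,c2⟩,⟨d1,d2⟩,⟨e1,e2⟩,⟨f1,f2⟩,⟨g1,g2⟩,⟨h1,h2⟩,⟨i1,i2⟩,⟨j1,j2⟩⟩ := p
  simp only [lhsDom, proj1234, proj1567, proj2589, proj368X, proj479X,
    app1567, app2589, app368X, app479X, Sb1, DomB1] at hp
  obtain ⟨-, ⟨hfh, hc, -⟩, ⟨hE, hb, -⟩, ⟨hK, -, -⟩, hlast, -⟩ := hp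
  have hE_eq : e1 + b1*((f1 + c1*h1)/c1) = (c1*e1 + b1*f1 + b1*c1*h1)/c1 := by
    field_simp
    ring
  have hK_eq : b1*((f1 + c1*h1)/c1)/κ + a1*(c1*h1/κ) =
      (b1*f1 + b1*c1*h1 + a1*c1^2*h1)/(c1*κ) := by
    field_simp
  replace hE := left_ne_zero_of_mul (hE_eq ▸ hE)
  obtain ⟨hK, hcκ⟩ := div_ne_zero_iff.1 (hK_eq ▸ hK)
  have hκ : κ ≠ 0 := right_ne_zero_of_mul hcκ
  simp only [hE_eq, hK_eq] at hlast
  have hlast_eq : b1*e1/((c1*e1 + b1*f1 + b1*c1*h1)/c1) +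
      a1*(b1*((f1 + c1*h1)/c1)/κ)/((b1*f1 + b1*c1*h1 + a1*c1^2*h1)/(c1*κ)) *
        (c1*f1/(f1 + c1*h1)) =
      b1*c1*(f1 + c1*h1)*(e1*(b1 + a1*c1) + a1*b1*f1) /
        ((c1*e1 + b1*f1 + b1*c1*h1)*(b1*f1 + b1*c1*h1 + a1*c1^2*h1)) := by
    -- `field_simp` cancels `E` and `K` only when they are atoms.
    generalize hEdef : c1*e1 + b1*f1 + b1*c1*h1 = E at hE ⊢
    generalize hKdef : b1*f1 + b1*c1*h1 + a1*c1^2*h1 = K at hK ⊢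
    field_simp
    subst hEdef hKdef
    ring
  rw [hlast_eq] at hlast
  have hN : e1*(b1 + a1*c1) + a1*b1*f1 ≠ 0 := right_ne_zero_of_mul (left_ne_zero_of_mul hlast)
  simp only [lhs, sb1SimplexValue, Function.comp_apply, app1234, app1567, app2589, app368X,
    app479X, Sb1, Prod.mk.injEq, and_true, true_and, hE_eq, hK_eq, hlast_eq]
  generalize c1*e1 + b1*f1 + b1*c1*h1 = E at hE ⊢
  generalize b1*f1 + b1*c1*h1 + a1*c1^2*h1 = K at hK ⊢
  refine ⟨?_, ?_, ?_, ?_, ?_, ?_⟩ <;> field_simp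

theorem rhs_Sb1_eq_sb1SimplexValue {κ : ℂ} {p : P C2} (hp : rhsDom DomB1 (Sb1 κ) p) :
    rhs (Sb1 κ) p = sb1SimplexValue κ p := by
  obtain ⟨⟨a1,a2⟩,⟨b1,b2⟩,⟨c1,c2⟩,⟨d1,d2⟩,⟨e1,e2⟩,⟨f1,f2⟩,⟨g1,g2⟩,⟨h1,h2⟩,⟨i1,i2⟩,⟨j1,j2⟩⟩ := p
  simp only [rhsDom, proj1234, proj1567, proj2589, proj368X, proj479X,
    app1234, app1567, app2589, app368X, Sb1, DomB1] at hp
  obtain ⟨⟨hbac, ha, ha2⟩, ⟨hN, hab, -⟩, ⟨hK, hac, hb2⟩, ⟨hlast, -, -⟩, ⟨hS, -, -⟩⟩ := hp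
  have hb : b1 ≠ 0 := right_ne_zero_of_mul (div_ne_zero_iff.1 hab).1
  obtain ⟨hc, hκ⟩ := div_ne_zero_iff.1 hac
  replace hc := right_ne_zero_of_mul hc
  have hN_eq : e1 + a1*b1/(b1 + a1*c1)*f1 = (e1*(b1 + a1*c1) + a1*b1*f1)/(b1 + a1*c1) := by
    field_simp
  have hK_eq : a1*b1/(b1 + a1*c1)*f1/κ + a1*c1/κ*h1 =
      a1*(b1*f1 + b1*c1*h1 + a1*c1^2*h1)/((b1 + a1*c1)*κ) := by
    field_simp
    ring
  have hS_eq : g1*e2/a2 + d1*b2/a2*(i1*e2/b2) = e2*(g1 + d1*i1)/a2 := by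
    field_simp
  replace hN := left_ne_zero_of_mul (hN_eq ▸ hN)
  replace hK := right_ne_zero_of_mul (left_ne_zero_of_mul (hK_eq ▸ hK))
  have he2 : e2 ≠ 0 := left_ne_zero_of_mul (left_ne_zero_of_mul (hS_eq ▸ hS))
  simp only [hN_eq, hK_eq] at hlast
  have hlast_eq : (e1*(b1 + a1*c1) + a1*b1*f1)/(b1 + a1*c1)/(a1*b1/(b1 + a1*c1)) +
      (b1 + a1*c1)/a1*(a1*(b1*f1 + b1*c1*h1 + a1*c1^2*h1)/((b1 + a1*c1)*κ)/(a1*c1/κ)) =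
      (b1 + a1*c1)*(c1*e1 + b1*f1 + b1*c1*h1)/(a1*b1*c1) := by
    field_simp
    ring
  rw [hlast_eq] at hlast
  have hE : c1*e1 + b1*f1 + b1*c1*h1 ≠ 0 := right_ne_zero_of_mul (left_ne_zero_of_mul hlast)
  simp only [rhs, sb1SimplexValue, Function.comp_apply, app1234, app1567, app2589, app368X,
    app479X, Sb1, Prod.mk.injEq, and_true, hN_eq, hK_eq, hlast_eq, hS_eq]
  refine ⟨?_, ?_, ?_, ?_, ?_, ?_, ?_, ?_, ?_⟩ <;> field_simp

theorem exists_Sb1_Sb1_ne (κ : ℂ) :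
    ∃ p : Q C2, DomB1 p ∧ DomB1 (Sb1 κ p) ∧ Sb1 κ (Sb1 κ p) ≠ p :=
  ⟨((1,1),(1,1),(0,1),(1,1)), by norm_num [DomB1], by norm_num [Sb1, DomB1], by simp [Sb1]⟩

theorem Sb1_4simplex_noninvolutive_invariants_general (κ : ℂ) :
    (∀ p : P C2, lhsDom DomB1 (Sb1 κ) p → rhsDom DomB1 (Sb1 κ) p →
      lhs (Sb1 κ) p = rhs (Sb1 κ) p) ∧
    (∃ p : Q C2, DomB1 p ∧ DomB1 (Sb1 κ p) ∧ Sb1 κ (Sb1 κ p) ≠ p) ∧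
    (∀ x1 x2 y1 y2 z1 z2 t1 t2 : ℂ,
      DomB1 ((x1,x2),(y1,y2),(z1,z2),(t1,t2)) →
      match Sb1 κ ((x1,x2),(y1,y2),(z1,z2),(t1,t2)) with
      | ((_,u2),(_,v2),(_,w2),(_,r2)) =>
        u2 = x2 ∧ v2 = y2 ∧ w2*r2 = t2*z2 ∧ w2 + r2 = t2 + z2) :=
  ⟨fun _ hL hR => (lhs_Sb1_eq_sb1SimplexValue hL).trans (rhs_Sb1_eq_sb1SimplexValue hR).symm,
    exists_Sb1_Sb1_ne κ,
    fun _ _ _ _ _ _ _ _ _ => ⟨rfl, rfl, rfl, rfl⟩⟩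

/-- The map S₁ : (ℂ²)⁴ → (ℂ²)⁴,
S₁(x₁,x₂,y₁,y₂,z₁,z₂,t₁,t₂) = (x₁y₁/(y₁+x₁z₁), x₂, x₁z₁/κ, y₂, (y₁+x₁z₁)/x₁, t₂, t₁y₂/x₂, z₂),
is a 4-simplex map (wherever all denominators on both composed sides are nonzero),
it is noninvolutive, and I₁ = x₂, I₂ = y₂, I₃ = t₂z₂, I₄ = t₂+z₂ are invariants:
writing S₁(…) = (u₁,u₂,v₁,v₂,w₁,w₂,r₁,r₂), one has u₂ = x₂, v₂ = y₂, w₂r₂ = t₂z₂ and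
w₂ + r₂ = t₂ + z₂ wherever defined. -/
theorem Sb1_4simplex_noninvolutive_invariants (κ : ℂ) (hκ : κ ≠ 0) :
    (∀ p : P C2, lhsDom DomB1 (Sb1 κ) p → rhsDom DomB1 (Sb1 κ) p →
      lhs (Sb1 κ) p = rhs (Sb1 κ) p) ∧
    (∃ p : Q C2, DomB1 p ∧ DomB1 (Sb1 κ p) ∧ Sb1 κ (Sb1 κ p) ≠ p) ∧
    (∀ x1 x2 y1 y2 z1 z2 t1 t2 : ℂ,
      DomB1 ((x1,x2),(y1,y2),(z1,z2),(t1,t2)) →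
      match Sb1 κ ((x1,x2),(y1,y2),(z1,z2),(t1,t2)) with
      | ((_,u2),(_,v2),(_,w2),(_,r2)) =>
        u2 = x2 ∧ v2 = y2 ∧ w2*r2 = t2*z2 ∧ w2 + r2 = t2 + z2) :=
  Sb1_4simplex_noninvolutive_invariants_general κ

end Paper4Simplex
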